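/- If a Turing machine M accepts coBHP and for every pair ⟨N',x'⟩ ∈ coHP there exists t₀ such that M runs for fewer than t₀ steps on input ⟨N',x',1^{t₀}⟩, then coHP is computably enumerable (hence a contradiction, since coHP is not c.e.). -/

import Mathlib

open Nat.Partrec (Code)

/-- Inputs `⟨N, x, 1^t⟩`: a machine code `N`, an input `x`, and a padding length `t`. -/
abbrev Input : Type := (Code × ℕ) × ℕ

/-- `BHP`: the bounded halting problem, triples `⟨N,x,1^t⟩` such that `N` has an
accepting computation on `x` within `t` steps. -/
def BHP : Set Input := {p | (Nat.Partrec.Code.evaln p.2 p.1.1 p.1.2).isSome}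

/-- `coBHP`: the complement of the bounded halting problem. -/
def coBHP : Set Input := BHPᶜ

/-- `HP`: the halting problem. -/
def HP : Set (Code × ℕ) := {p | (p.1.eval p.2).Dom}

/-- `coHP`: the complement of the halting problem. -/
def coHP : Set (Code × ℕ) := HPᶜ

/-- An abstract (deterministic) Turing machine: an acceptance predicate on
inputs together with a running-time function `time` (T_M). -/
structure Machine (α : Type) where
  accepts : α → Prop
  time : α → ℕ

/-- `M` accepts exactly the language `L`. -/
def Accepts {α : Type} (M : Machine α) (L : Set α) : Prop :=
  ∀ w, M.accepts w ↔ w ∈ L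

open Filter

/-! A machine accepting `coBHP` that answers fast on padded inputs yields a semi-decision procedure
for `coHP`: search for a padding `t` on which `M` accepts `⟨N,x,1^t⟩` in fewer than `t` steps.
Such a `t` exists for every `⟨N,x⟩ ∈ coHP` by hypothesis. Conversely, once `M` accepts that fast,
it accepts `⟨N,x,1^t'⟩` for every larger `t'`, whereas a halting computation of `N` on `x` puts
`⟨N,x,1^t'⟩` into `BHP` for all large `t'`. -/

theorem ComputablePred.exists_nat_re {α : Type*} [Primcodable α] {p : α × ℕ → Prop}
    (hp : ComputablePred p) : REPred fun a => ∃ n, p (a, n) := by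
  obtain ⟨_, hdec⟩ := hp
  refine (Partrec.rfind hdec.partrec.to₂).dom_re.of_eq fun a => Nat.rfind_dom.trans ?_
  simp

theorem mem_coBHP_of_mem_coHP {q : Code × ℕ} (hq : q ∈ coHP) (t : ℕ) : (q, t) ∈ coBHP := by
  intro hbounded
  exact hq (Part.dom_iff_mem.2 ⟨_, Nat.Partrec.Code.evaln_sound (Option.get_mem hbounded)⟩)

theorem eventually_mem_BHP_of_mem_HP {q : Code × ℕ} (hq : q ∈ HP) :
    ∀ᶠ t in atTop, (q, t) ∈ BHP := by
  obtain ⟨y, hy⟩ := Part.dom_iff_mem.1 hq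
  obtain ⟨k, hk⟩ := Nat.Partrec.Code.evaln_complete.1 hy
  filter_upwards [eventually_ge_atTop k] with t hkt
  exact Option.isSome_iff_exists.2 ⟨y, Nat.Partrec.Code.evaln_mono hkt hk⟩

section

variable {M : Machine Input} (hAcc : Accepts M coBHP)
  (hStab : ∀ q t₀ t, M.time (q, t₀) < t₀ → t₀ ≤ t → (M.accepts (q, t) ↔ M.accepts (q, t₀)))
include hAcc hStab

theorem mem_coHP_of_accepts_fast {q : Code × ℕ} {t₀ : ℕ} (hacc : M.accepts (q, t₀))
    (hfast : M.time (q, t₀) < t₀) : q ∈ coHP := by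
  intro hq
  have hacc_large : ∀ᶠ t in atTop, M.accepts (q, t) := by
    filter_upwards [eventually_ge_atTop t₀] with t ht
    exact (hStab q t₀ t hfast ht).2 hacc
  obtain ⟨t, hacc_t, hbounded⟩ := (hacc_large.and (eventually_mem_BHP_of_mem_HP hq)).exists
  exact (hAcc _).1 hacc_t hbounded

theorem mem_coHP_iff_exists_accepts_fast (hFast : ∀ q ∈ coHP, ∃ t₀, M.time (q, t₀) < t₀)
    (q : Code × ℕ) :
    q ∈ coHP ↔ ∃ t, M.accepts (q, t) ∧ M.time (q, t) < t := by
  refine ⟨fun hq => ?_, fun ⟨t, hacc, hfast⟩ => mem_coHP_of_accepts_fast hAcc hStab hacc hfast⟩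
  obtain ⟨t₀, hfast⟩ := hFast q hq
  exact ⟨t₀, (hAcc _).2 (mem_coBHP_of_mem_coHP hq t₀), hfast⟩

end

/-- If a Turing machine `M` accepts `coBHP` (the simulation checking whether `M`
halts within fewer than `t` steps and accepts is effective, `hComp`; and `M` is a
one-tape machine so that halting on `⟨N,x,1^{t₀}⟩` in fewer than `t₀` steps means
the padding was not fully read and the behavior stabilizes for larger paddings,
`hStab`), and for every pair `⟨N',x'⟩ ∈ coHP` there exists `t₀` such that `M` runs
for fewer than `t₀` steps on input `⟨N',x',1^{t₀}⟩`, then `coHP` is computably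
enumerable. -/
theorem coHP_ce_of_fast_machine (M : Machine Input)
    (hAcc : Accepts M coBHP)
    (hComp : ComputablePred fun w : Input => M.accepts w ∧ M.time w < w.2)
    (hStab : ∀ (N : Code) (x t₀ t : ℕ), M.time ((N, x), t₀) < t₀ → t₀ ≤ t →
      ((M.accepts ((N, x), t) ↔ M.accepts ((N, x), t₀)) ∧
        M.time ((N, x), t) < t₀))
    (hFast : ∀ q ∈ coHP, ∃ t₀, M.time (q, t₀) < t₀) :
    REPred (fun q => q ∈ coHP) :=
  hComp.exists_nat_re.of_eq fun q =>
    (mem_coHP_iff_exists_accepts_fast hAcc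
      (fun q t₀ t hfast hle => (hStab q.1 q.2 t₀ t hfast hle).1) hFast q).symm
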